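/- Let G be a graph on n vertices with adjacency matrix A and walk matrix W, let p be a prime and λ₀ an integer. If the rank of W over the field with p elements is n−1, then the rank of A − λ₀I over the field with p elements is at least n−2. -/

import Mathlib

open Matrix

open scoped Classical in
/-- The (0,1)-adjacency matrix of a simple graph on `Fin n`, with entries in `R`. -/
noncomputable def adjMat {n : ℕ} (R : Type*) [Zero R] [One R] (G : SimpleGraph (Fin n)) :
    Matrix (Fin n) (Fin n) R :=
  Matrix.of fun i j => if G.Adj i j then 1 else 0

/-- The walk matrix `W = [e, Ae, A²e, …, A^{n−1}e]` of a square matrix `A`,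
where `e` is the all-ones vector: the `j`-th column is `A^j e`. -/
noncomputable def walkMatrix {R : Type*} [CommRing R] {n : ℕ} (A : Matrix (Fin n) (Fin n) R) :
    Matrix (Fin n) (Fin n) R :=
  Matrix.of fun i j => (A ^ (j : ℕ) *ᵥ fun _ => 1) i

/-!
An eigenvector `v` of the symmetric matrix `A` for `λ₀` with `∑ v = 0` satisfies
`vᵀ Aʲ e = λ₀ʲ vᵀ e = 0`, so it lies in the left kernel of `W`. The eigenspace meets the
hyperplane `∑ v = 0` in codimension at most one, hence over `𝔽_p`
`dim ker (A − λ₀I) ≤ dim ker Wᵀ + 1 = 2`.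
-/

theorem Submodule.finrank_le_finrank_inf_ker_add_one {K V : Type*} [Field K] [AddCommGroup V]
    [Module K V] [FiniteDimensional K V] (P : Submodule K V) (f : V →ₗ[K] K) :
    Module.finrank K P ≤ Module.finrank K ↥(P ⊓ LinearMap.ker f) + 1 := by
  have hsup := Submodule.finrank_sup_add_finrank_inf_eq P (LinearMap.ker f)
  have hf := f.finrank_range_add_finrank_ker
  have hrange : Module.finrank K (LinearMap.range f) ≤ 1 :=
    (Submodule.finrank_le _).trans (Module.finrank_self K).le
  have := Submodule.finrank_le (P ⊔ LinearMap.ker f)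
  omega

theorem Matrix.rank_add_finrank_ker_mulVecLin {K ι : Type*} [Field K] [Fintype ι]
    (M : Matrix ι ι K) :
    M.rank + Module.finrank K (LinearMap.ker M.mulVecLin) = Fintype.card ι := by
  rw [Matrix.rank, LinearMap.finrank_range_add_finrank_ker, Module.finrank_fintype_fun_eq_card]

theorem Matrix.pow_mulVec_of_mulVec_eq_smul {R ι : Type*} [CommRing R] [Fintype ι]
    [DecidableEq ι] {A : Matrix ι ι R} {μ : R} {v : ι → R} (hv : A *ᵥ v = μ • v)
    (j : ℕ) : A ^ j *ᵥ v = μ ^ j • v := by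
  induction j with
  | zero => simp
  | succ j ih => rw [pow_succ, ← mulVec_mulVec, hv, mulVec_smul, ih, smul_smul, pow_succ']

theorem Matrix.map_sub_smul_one {R S ι : Type*} [CommRing R] [CommRing S] [Fintype ι]
    [DecidableEq ι] (f : R →+* S) (A : Matrix ι ι R) (c : R) :
    (A - c • (1 : Matrix ι ι R)).map f = A.map f - f c • 1 := by
  rw [← f.mapMatrix_apply, map_sub, f.mapMatrix_apply, f.mapMatrix_apply,
    Matrix.map_smul' f c 1 f.map_mul, Matrix.map_one f f.map_zero f.map_one]

theorem adjMat_eq_adjMatrix {n : ℕ} (R : Type*) [Zero R] [One R] (G : SimpleGraph (Fin n))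
    [DecidableRel G.Adj] : adjMat R G = G.adjMatrix R := by
  ext i j
  simp [adjMat, SimpleGraph.adjMatrix_apply]

theorem adjMat_isSymm {n : ℕ} {R : Type*} [Zero R] [One R] (G : SimpleGraph (Fin n)) :
    (adjMat R G).IsSymm := by
  classical
  rw [adjMat_eq_adjMatrix]
  exact G.isSymm_adjMatrix

theorem map_adjMat {n : ℕ} {R S : Type*} [Zero R] [One R] [Zero S] [One S] (f : R → S)
    (h0 : f 0 = 0) (h1 : f 1 = 1) (G : SimpleGraph (Fin n)) :
    (adjMat R G).map f = adjMat S G := by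
  ext i j
  simp only [adjMat, map_apply, of_apply]
  split_ifs <;> assumption

theorem walkMatrix_map {R S : Type*} [CommRing R] [CommRing S] {n : ℕ} (f : R →+* S)
    (A : Matrix (Fin n) (Fin n) R) : (walkMatrix A).map f = walkMatrix (A.map f) := by
  ext i j
  have hones : (fun _ : Fin n => (1 : S)) = f ∘ fun _ => 1 := funext fun _ => f.map_one.symm
  simp only [walkMatrix, map_apply, of_apply, RingHom.map_mulVec, hones, ← f.mapMatrix_apply,
    map_pow]

theorem vecMul_walkMatrix_eq_zero {R : Type*} [CommRing R] {n : ℕ}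
    {A : Matrix (Fin n) (Fin n) R} (hA : A.IsSymm) {μ : R} {v : Fin n → R}
    (hv : A *ᵥ v = μ • v) (hsum : (fun _ => 1) ⬝ᵥ v = 0) : v ᵥ* walkMatrix A = 0 := by
  funext j
  have hsymm : (A ^ (j : ℕ))ᵀ = A ^ (j : ℕ) := by rw [transpose_pow, hA.eq]
  calc (v ᵥ* walkMatrix A) j = v ⬝ᵥ (A ^ (j : ℕ) *ᵥ fun _ => 1) := by
        simp [walkMatrix, vecMul, dotProduct, mulVec]
    _ = (fun _ => 1) ⬝ᵥ (A ^ (j : ℕ) *ᵥ v) := by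
        rw [dotProduct_mulVec, ← mulVec_transpose, hsymm, dotProduct_comm]
    _ = 0 := by rw [pow_mulVec_of_mulVec_eq_smul hv, dotProduct_smul, hsum, smul_zero]

theorem rank_walkMatrix_le_rank_sub_smul_one_add_one {K : Type*} [Field K] {n : ℕ}
    {A : Matrix (Fin n) (Fin n) K} (hA : A.IsSymm) (μ : K) :
    (walkMatrix A).rank ≤ (A - μ • 1).rank + 1 := by
  have hle : LinearMap.ker (A - μ • 1).mulVecLin ⊓ LinearMap.ker (dotProductEquiv K _ 1) ≤
      LinearMap.ker (walkMatrix A)ᵀ.mulVecLin := by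
    rintro v ⟨hv, hsum⟩
    rw [SetLike.mem_coe, LinearMap.mem_ker, mulVecLin_apply, sub_mulVec, smul_mulVec, one_mulVec,
      sub_eq_zero] at hv
    rw [LinearMap.mem_ker, mulVecLin_apply, mulVec_transpose]
    exact vecMul_walkMatrix_eq_zero hA hv hsum
  have hcodim := (LinearMap.ker (A - μ • 1).mulVecLin).finrank_le_finrank_inf_ker_add_one
    (dotProductEquiv K _ 1)
  have hmono := Submodule.finrank_mono hle
  have hB := (A - μ • 1).rank_add_finrank_ker_mulVecLin
  have hW := (walkMatrix A)ᵀ.rank_add_finrank_ker_mulVecLin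
  rw [rank_transpose] at hW
  omega

/-- **Lemma 3.6.** If `rank_p W = n − 1`, then
`rank_p (A − λ₀I) ≥ n − 2`. -/
theorem stmt_9 {n : ℕ} (G : SimpleGraph (Fin n))
    (A : Matrix (Fin n) (Fin n) ℤ) (hA : A = adjMat ℤ G)
    (W : Matrix (Fin n) (Fin n) ℤ) (hW : W = walkMatrix A)
    (p : ℕ) (hp : p.Prime) (lam : ℤ)
    (hrank : (W.map (Int.cast : ℤ → ZMod p)).rank = n - 1) :
    n - 2 ≤ ((A - lam • (1 : Matrix (Fin n) (Fin n) ℤ)).map (Int.cast : ℤ → ZMod p)).rank := by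
  have : Fact p.Prime := ⟨hp⟩
  have hAmap : A.map (Int.cast : ℤ → ZMod p) = adjMat (ZMod p) G := by
    rw [hA]
    exact map_adjMat _ Int.cast_zero Int.cast_one G
  have hWmap : W.map (Int.cast : ℤ → ZMod p) = walkMatrix (adjMat (ZMod p) G) := by
    rw [hW, ← hAmap]
    exact walkMatrix_map (Int.castRingHom (ZMod p)) A
  have hBmap : (A - lam • 1).map (Int.cast : ℤ → ZMod p) =
      adjMat (ZMod p) G - (lam : ZMod p) • 1 := by
    rw [← hAmap]
    exact map_sub_smul_one (Int.castRingHom (ZMod p)) A lam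
  have := rank_walkMatrix_le_rank_sub_smul_one_add_one (adjMat_isSymm G) (lam : ZMod p)
  rw [hWmap] at hrank
  rw [hBmap]
  omega
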